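/- Let ς_n : J → Ann_K J with ς_n(J²) = 0 and ς_i : K → Ann_K J with ς_i(J) = 0 (for i = 1, …, n−1) be additive maps. Then the map Υ : R_n(K,J) → R_n(K,J) given by Υ([a_{i,j}]) = (ς_n(a_{1,n}) + Σ_{i=1}^{n−1} ς_i(a_{i+1,i})) e_{n,1} is a derivation of R_n(K,J). -/

import Mathlib

/- The image of `Υ` lies in the corner entry `(n, 1)` and consists of elements annihilating `J`.
Multiplying such a matrix by an element of `R_n(K,J)` on either side only meets entries of the
first row or the last column, which lie in `J`; hence `Υ a * b = a * Υ b = 0`. On the other hand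
every entry of `a * b` on or above the first subdiagonal lies in `J`, and its corner entry
`(1, n)` is a sum of products of elements of `J`, so `Υ (a * b) = 0` as well. -/

open Matrix

/-- `R_n(K,J)`: the non-unital subring of `n × n` matrices over `K` whose entries on and
above the main diagonal lie in the two-sided ideal `J`. -/
def Rset (n : ℕ) (K : Type) [Ring K] (J : TwoSidedIdeal K) :
    NonUnitalSubring (Matrix (Fin n) (Fin n) K) where
  carrier := {M | ∀ i j : Fin n, i ≤ j → M i j ∈ J}
  zero_mem' := by intro i j _; simp [J.zero_mem]
  add_mem' := by intro a b ha hb i j h; exact J.add_mem (ha i j h) (hb i j h)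
  neg_mem' := by intro a ha i j h; exact J.neg_mem (ha i j h)
  mul_mem' := by
    intro a b ha hb i j h
    show (∑ k, a i k * b k j) ∈ J
    refine J.finsetSum_mem _ _ fun k _ => ?_
    rcases le_or_gt i k with hik | hik
    · exact J.mul_mem_right _ _ (ha i k hik)
    · exact J.mul_mem_left _ _ (hb k j (le_trans hik.le h))

lemma stdBasis_mem {n : ℕ} {K : Type} [Ring K] {J : TwoSidedIdeal K}
    {i j : Fin n} {y : K} (h : i ≤ j → y ∈ J) :
    Matrix.single i j y ∈ Rset n K J := by
  intro a b hab
  rw [Matrix.single]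
  by_cases hc : i = a ∧ j = b
  · obtain ⟨rfl, rfl⟩ := hc
    simpa using h hab
  · simp [Matrix.of_apply, if_neg hc, J.zero_mem]

def TwoSidedIdeal.annihilator {R : Type*} [NonUnitalNonAssocRing R] (J : TwoSidedIdeal R) :
    AddSubgroup R where
  carrier := {x | ∀ t ∈ J, x * t = 0 ∧ t * x = 0}
  zero_mem' := by simp
  add_mem' hx hy t ht := by
    simp only [add_mul, mul_add, (hx t ht).1, (hx t ht).2, (hy t ht).1, (hy t ht).2, add_zero,
      and_self]
  neg_mem' hx t ht := by simp [(hx t ht).1, (hx t ht).2]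

namespace Matrix

variable {l m n α : Type*} [Fintype m] [DecidableEq m] [NonUnitalNonAssocSemiring α]

lemma single_mul_eq_zero [DecidableEq l] {M : Matrix m n α} {i : l} {j : m} {c : α}
    (h : ∀ k, c * M j k = 0) :
    single i j c * M = 0 := by
  ext a b
  by_cases ha : a = i
  · subst ha
    simp [h]
  · simp [ha]

lemma mul_single_eq_zero [DecidableEq n] {M : Matrix l m α} {i : m} {j : n} {c : α}
    (h : ∀ k, M k i * c = 0) :
    M * single i j c = 0 := by
  ext a b
  by_cases hb : b = j
  · subst hb
    simp [h]
  · simp [hb]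

end Matrix

lemma map_sum_eq_zero_of_mem {M N S ι : Type*} [AddCommMonoid M] [AddCancelMonoid N]
    [SetLike S M] [AddSubmonoidClass S M] {s : S} {f : M → N}
    (hf : ∀ y ∈ s, ∀ z ∈ s, f (y + z) = f y + f z) (t : Finset ι) {g : ι → M}
    (hg : ∀ i ∈ t, g i ∈ s ∧ f (g i) = 0) : f (∑ i ∈ t, g i) = 0 := by
  have hf0 : f 0 = 0 := by simpa using (hf 0 (zero_mem s) 0 (zero_mem s)).symm
  refine (Finset.sum_induction g (fun x => x ∈ s ∧ f x = 0) (fun x y hx hy => ?_)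
    ⟨zero_mem s, hf0⟩ hg).2
  exact ⟨add_mem hx.1 hy.1, by rw [hf x hx.1 y hy.1, hx.2, hy.2, add_zero]⟩

lemma Rset.mul_apply_mem_of_le_succ {n : ℕ} {K : Type} [Ring K] {J : TwoSidedIdeal K}
    {A B : Matrix (Fin n) (Fin n) K} (hA : A ∈ Rset n K J) (hB : B ∈ Rset n K J) {r c : Fin n}
    (h : (r : ℕ) ≤ c + 1) : (A * B) r c ∈ J := by
  rw [mul_apply]
  refine J.finsetSum_mem _ _ fun k _ => ?_
  rcases le_or_gt r k with hrk | hkr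
  · exact J.mul_mem_right _ _ (hA r k hrk)
  · exact J.mul_mem_left _ _ (hB k c (by rw [Fin.lt_def] at hkr; rw [Fin.le_def]; omega))

section AnnihilatorCoeff

variable {n : ℕ} {K : Type} [Ring K] {J : TwoSidedIdeal K}

/-- The coefficient of `e_{n,1}` in `Υ(M)`. The index bounds are explicit terms because bounds
proved by `omega` here would become auxiliary lemmas reused in the statement of the main theorem. -/
def annihilatorCoeff (hn : 2 ≤ n) (ςn : K → K) (ς : Fin (n - 1) → K → K)
    (M : Matrix (Fin n) (Fin n) K) : K :=
  ςn (M ⟨0, Nat.zero_lt_of_lt hn⟩ ⟨n - 1, Nat.sub_one_lt_of_lt hn⟩) +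
    ∑ i : Fin (n - 1),
      ς i (M ⟨i + 1, Nat.add_lt_of_lt_sub i.isLt⟩
        ⟨i, Nat.lt_of_lt_of_le i.isLt (Nat.sub_le n 1)⟩)

variable (hn : 2 ≤ n) {ςn : K → K} {ς : Fin (n - 1) → K → K}

lemma annihilatorCoeff_add (haddn : ∀ y ∈ J, ∀ z ∈ J, ςn (y + z) = ςn y + ςn z)
    (hadd : ∀ i : Fin (n - 1), ∀ a b : K, ς i (a + b) = ς i a + ς i b)
    {A B : Matrix (Fin n) (Fin n) K} (hA : A ∈ Rset n K J) (hB : B ∈ Rset n K J) :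
    annihilatorCoeff hn ςn ς (A + B) =
      annihilatorCoeff hn ςn ς A + annihilatorCoeff hn ςn ς B := by
  have hA₀ := hA ⟨0, by omega⟩ ⟨n - 1, by omega⟩ (Nat.zero_le _)
  have hB₀ := hB ⟨0, by omega⟩ ⟨n - 1, by omega⟩ (Nat.zero_le _)
  simp only [annihilatorCoeff, Matrix.add_apply, hadd, Finset.sum_add_distrib,
    haddn _ hA₀ _ hB₀]
  exact add_add_add_comm _ _ _ _

lemma annihilatorCoeff_mem_annihilator (hannn : ∀ y ∈ J, ςn y ∈ J.annihilator)
    (hann : ∀ i : Fin (n - 1), ∀ x : K, ς i x ∈ J.annihilator)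
    {M : Matrix (Fin n) (Fin n) K} (hM : M ∈ Rset n K J) :
    annihilatorCoeff hn ςn ς M ∈ J.annihilator :=
  add_mem (hannn _ (hM _ _ (Nat.zero_le _))) (sum_mem fun i _ => hann i _)

lemma annihilatorCoeff_mul (haddn : ∀ y ∈ J, ∀ z ∈ J, ςn (y + z) = ςn y + ςn z)
    (hsqn : ∀ y ∈ J, ∀ z ∈ J, ςn (y * z) = 0)
    (hJ : ∀ i : Fin (n - 1), ∀ y ∈ J, ς i y = 0)
    {A B : Matrix (Fin n) (Fin n) K} (hA : A ∈ Rset n K J) (hB : B ∈ Rset n K J) :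
    annihilatorCoeff hn ςn ς (A * B) = 0 := by
  have hcorner : ςn ((A * B) ⟨0, by omega⟩ ⟨n - 1, by omega⟩) = 0 := by
    rw [mul_apply]
    refine map_sum_eq_zero_of_mem haddn _ fun k _ => ?_
    have hAk := hA ⟨0, by omega⟩ k (Nat.zero_le _)
    have hBk := hB k ⟨n - 1, by omega⟩ (Nat.le_sub_one_of_lt k.isLt)
    exact ⟨J.mul_mem_right _ _ hAk, hsqn _ hAk _ hBk⟩
  rw [annihilatorCoeff, hcorner, zero_add]
  exact Finset.sum_eq_zero fun i _ => hJ i _ (Rset.mul_apply_mem_of_le_succ hA hB le_rfl)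

end AnnihilatorCoeff

/-- annihilator derivations.  The map
`Υ([a_{i,j}]) = (ς_n(a_{1,n}) + Σ_{i=1}^{n-1} ς_i(a_{i+1,i})) e_{n,1}` is a derivation of
`R_n(K,J)`. -/
theorem annihilator_map_is_derivation (n : ℕ) (hn : 2 ≤ n) (K : Type) [Ring K]
    (J : TwoSidedIdeal K) (ςn : K → K) (ς : Fin (n - 1) → K → K)
    (haddn : ∀ y ∈ J, ∀ z ∈ J, ςn (y + z) = ςn y + ςn z)
    (hsqn : ∀ y ∈ J, ∀ z ∈ J, ςn (y * z) = 0)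
    (hannn : ∀ y ∈ J, ∀ t ∈ J, ςn y * t = 0 ∧ t * ςn y = 0)
    (hadd : ∀ i : Fin (n - 1), ∀ a b : K, ς i (a + b) = ς i a + ς i b)
    (hJ : ∀ i : Fin (n - 1), ∀ y ∈ J, ς i y = 0)
    (hann : ∀ i : Fin (n - 1), ∀ x : K, ∀ t ∈ J, ς i x * t = 0 ∧ t * ς i x = 0) :
    ∃ Υ : ↥(Rset n K J) → ↥(Rset n K J),
      (∀ M : ↥(Rset n K J),
        (↑(Υ M) : Matrix (Fin n) (Fin n) K) =
          Matrix.single ⟨n - 1, by omega⟩ ⟨0, by omega⟩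
            (ςn ((M : Matrix (Fin n) (Fin n) K) ⟨0, by omega⟩ ⟨n - 1, by omega⟩) +
             ∑ i : Fin (n - 1),
               ς i ((M : Matrix (Fin n) (Fin n) K)
                 ⟨(i : ℕ) + 1, by have := i.isLt; omega⟩ ⟨(i : ℕ), by have := i.isLt; omega⟩))) ∧
      (∀ a b : ↥(Rset n K J), Υ (a + b) = Υ a + Υ b) ∧
      (∀ a b : ↥(Rset n K J), Υ (a * b) = Υ a * b + a * Υ b) := by
  set p : Fin n := ⟨n - 1, by omega⟩
  set q : Fin n := ⟨0, by omega⟩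
  have hcoeff (M : Rset n K J) : annihilatorCoeff hn ςn ς M ∈ J.annihilator :=
    annihilatorCoeff_mem_annihilator hn hannn hann M.2
  refine ⟨fun M => ⟨single p q (annihilatorCoeff hn ςn ς M),
      stdBasis_mem fun h => absurd h (by simp [p, q]; omega)⟩,
    fun M => rfl, fun a b => Subtype.ext ?_, fun a b => Subtype.ext ?_⟩
  · simp only [AddMemClass.coe_add, annihilatorCoeff_add hn haddn hadd a.2 b.2, single_add]
  · simp only [AddMemClass.coe_add, MulMemClass.coe_mul,
      annihilatorCoeff_mul hn haddn hsqn hJ a.2 b.2, single_zero,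
      single_mul_eq_zero fun k => (hcoeff a _ (b.2 q k (Nat.zero_le _))).1,
      mul_single_eq_zero fun k => (hcoeff b _ (a.2 k p (Nat.le_sub_one_of_lt k.isLt))).2,
      add_zero]
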